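/- The space S(F,ψ) is mapped into itself by the Fourier transform f ↦ f̂, where f̂(x) = ∫^F f(y)ψ(xy) dy; and for every f ∈ S(F,ψ) and every x ∈ F the double transform formula f̂̂(x) = λ·f(−x) holds, where λ > 0 is the constant such that the double Fourier transform on k (with respect to ψ̄ and the chosen Haar measure) satisfies ĝ̂(u) = λ·g(−u) for all Schwartz–Bruhat functions g on k. -/

import Mathlib

noncomputable section

open MeasureTheory

/-- A field `F` with a split valuation `ν : F^× → Γ` (split by `t`), with residue field `k`,
residue map `ρ : O_F → k`, where `Γ` has a minimal positive element `one`. -/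
structure LiftSetup (Γ F k : Type*) [AddCommGroup Γ] [LinearOrder Γ] [IsOrderedAddMonoid Γ] [Field F] [Field k] where
  /-- the valuation (recorded on nonzero elements) -/
  ν : F → Γ
  /-- the splitting homomorphism `t : Γ → F^×` -/
  t : Γ → F
  /-- the residue map (recorded on the valuation ring) -/
  ρ : F → k
  /-- the minimal positive element of `Γ` -/
  one : Γ
  one_pos : 0 < one
  one_min : ∀ γ : Γ, 0 < γ → one ≤ γ
  ν_mul : ∀ x y : F, x ≠ 0 → y ≠ 0 → ν (x * y) = ν x + ν y
  ν_add : ∀ x y : F, x ≠ 0 → y ≠ 0 → x + y ≠ 0 → min (ν x) (ν y) ≤ ν (x + y)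
  t_ne : ∀ γ : Γ, t γ ≠ 0
  t_add : ∀ γ δ : Γ, t (γ + δ) = t γ * t δ
  ν_t : ∀ γ : Γ, ν (t γ) = γ
  ρ_add : ∀ x y : F, (x = 0 ∨ 0 ≤ ν x) → (y = 0 ∨ 0 ≤ ν y) → ρ (x + y) = ρ x + ρ y
  ρ_mul : ∀ x y : F, (x = 0 ∨ 0 ≤ ν x) → (y = 0 ∨ 0 ≤ ν y) → ρ (x * y) = ρ x * ρ y
  ρ_one : ρ 1 = 1
  ρ_surj : ∀ u : k, ∃ x : F, (x = 0 ∨ 0 ≤ ν x) ∧ ρ x = u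
  ρ_eq_zero : ∀ x : F, (x = 0 ∨ 0 ≤ ν x) → (ρ x = 0 ↔ (x = 0 ∨ 0 < ν x))

namespace LiftSetup

variable {Γ F k : Type*} [AddCommGroup Γ] [LinearOrder Γ] [IsOrderedAddMonoid Γ] [Field F] [Field k]
variable (S : LiftSetup Γ F k)

/-- The ring of integers `O_F` of the valuation. -/
def integers : Set F := {x | x = 0 ∨ 0 ≤ S.ν x}

/-- The translated fractional ideal `a + t(γ)O_F`. -/
def fracIdeal (a : F) (γ : Γ) : Set F := {x | (x - a) * S.t (-γ) ∈ S.integers}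

/-- The lift `f^{a,γ}` of a function `f` on the residue field `k`:
`f^{a,γ}(x) = f(ρ((x-a)t(-γ)))` for `x ∈ a + t(γ)O_F` and `0` otherwise. -/
def lift {A : Type*} [Zero A] (f : k → A) (a : F) (γ : Γ) : F → A :=
  (S.fracIdeal a γ).indicator fun x => f (S.ρ ((x - a) * S.t (-γ)))

/-- The homomorphism `η : F^× → k^×`, `x ↦ ρ(x t(-ν x))`. -/
def η (x : F) : k := S.ρ (x * S.t (-S.ν x))

end LiftSetup

section CGamma

variable (Γ : Type*) [AddCommGroup Γ] [LinearOrder Γ] [IsOrderedAddMonoid Γ]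

instance : IsDomain (AddMonoidAlgebra ℂ Γ) := NoZeroDivisors.to_isDomain _

/-- `ℂ(Γ)`: the field of fractions of the complex group algebra of `Γ`. -/
abbrev CGamma : Type _ := FractionRing (AddMonoidAlgebra ℂ Γ)

/-- The canonical embedding `ℂ → ℂ(Γ)`. -/
def embC : ℂ →+* CGamma Γ :=
  (algebraMap (AddMonoidAlgebra ℂ Γ) (CGamma Γ)).comp AddMonoidAlgebra.singleZeroRingHom

variable {Γ}

/-- The basis element `X^γ` of `ℂ(Γ)`. -/
def Xp (γ : Γ) : CGamma Γ :=
  algebraMap (AddMonoidAlgebra ℂ Γ) (CGamma Γ) (AddMonoidAlgebra.single γ 1)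

end CGamma

section GoodChar

variable {Γ F k : Type*} [AddCommGroup Γ] [LinearOrder Γ] [IsOrderedAddMonoid Γ] [Field F] [Field k] [TopologicalSpace k]

/-- `ψ` is a nontrivial good character of `F` of conductor `𝔣`: a homomorphism from the
additive group of `F` to the complex unit circle, trivial on `t(𝔣)O_F`, nontrivial on
`t(𝔣-1)O_F`, whose induced map `ψ̄` on the residue field `k` (given by
`ψ̄(ρ(x)) = ψ(t(𝔣-1)x)` for `x ∈ O_F`) is well defined and continuous. -/
def LiftSetup.IsGoodCharacter (S : LiftSetup Γ F k) (ψ : F → ℂ) (𝔣 : Γ) : Prop :=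
  (∀ x y : F, ψ (x + y) = ψ x * ψ y) ∧
  (∀ x : F, ‖ψ x‖ = 1) ∧
  (∀ x ∈ S.integers, ψ (S.t 𝔣 * x) = 1) ∧
  (∃ x ∈ S.integers, ψ (S.t (𝔣 - S.one) * x) ≠ 1) ∧
  (∃ ψbar : k → ℂ, Continuous ψbar ∧
    ∀ x ∈ S.integers, ψbar (S.ρ x) = ψ (S.t (𝔣 - S.one) * x))

end GoodChar

section LFmu

variable {Γ F k : Type*} [AddCommGroup Γ] [LinearOrder Γ] [IsOrderedAddMonoid Γ] [Field F] [Field k]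
  [MeasurableSpace k]

open MeasureTheory

/-- `𝓛(F)`: the `ℂ(Γ)`-span of the lifts of Haar-integrable functions on `k`. -/
def LFmu (S : LiftSetup Γ F k) (μ : Measure k) : Submodule (CGamma Γ) (F → CGamma Γ) :=
  Submodule.span (CGamma Γ)
    {g | ∃ f : k → ℂ, Integrable f μ ∧ ∃ (a : F) (γ : Γ),
        g = S.lift (fun u => embC Γ (f u)) a γ}

theorem liftC_mem_mu (S : LiftSetup Γ F k) (μ : Measure k)
    {f : k → ℂ} (hf : Integrable f μ) (a : F) (γ : Γ) :
    S.lift (fun u => embC Γ (f u)) a γ ∈ LFmu S μ :=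
  Submodule.subset_span ⟨f, hf, a, γ, rfl⟩

/-- `𝓛^γ`: the complex span of the lifts of Haar-integrable functions at height `γ`. -/
def Lheight (S : LiftSetup Γ F k) (μ : Measure k) (γ : Γ) : Submodule ℂ (F → ℂ) :=
  Submodule.span ℂ {g | ∃ f : k → ℂ, Integrable f μ ∧ ∃ a : F, g = S.lift f a γ}

end LFmu

section LFpsi

variable {Γ F k : Type*} [AddCommGroup Γ] [LinearOrder Γ] [IsOrderedAddMonoid Γ] [Field F] [Field k]
  [MeasurableSpace k]

open MeasureTheory

/-- `𝓛(F,ψ)`: the `ℂ(Γ)`-span of the functions `f·ψ_a` for `f ∈ 𝓛(F)`, `a ∈ F`. -/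
def LFpsi (S : LiftSetup Γ F k) (μ : Measure k) (ψ : F → ℂ) :
    Submodule (CGamma Γ) (F → CGamma Γ) :=
  Submodule.span (CGamma Γ)
    {g | ∃ f ∈ LFmu S μ, ∃ a : F, g = fun x => embC Γ (ψ (a * x)) * f x}

end LFpsi

open scoped Classical in
/-- The Fourier transform on `F`: `f̂(x) = ∫^F f(y)ψ(xy) dy`, computed via the extended
integral `Jext` on `𝓛(F,ψ)` (and defined to be `0` where the integrand is not integrable). -/
noncomputable def fourierF {Γ F k : Type*} [AddCommGroup Γ] [LinearOrder Γ] [IsOrderedAddMonoid Γ] [Field F] [Field k]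
    [MeasurableSpace k] (S : LiftSetup Γ F k) (μ : MeasureTheory.Measure k) (ψ : F → ℂ)
    (Jext : LFpsi S μ ψ →ₗ[CGamma Γ] CGamma Γ) (f : F → CGamma Γ) : F → CGamma Γ :=
  fun x =>
    if hm : (fun y => f y * embC Γ (ψ (x * y))) ∈ LFpsi S μ ψ then Jext ⟨_, hm⟩ else 0

/-- `S(F,ψ)`: the `ℂ(Γ)`-span of the functions `g^{a,γ}·ψ_b` for `g` in the Schwartz–Bruhat
space of `k`, `a, b ∈ F`, `γ ∈ Γ`. -/
def SFpsi {Γ F k : Type*} [AddCommGroup Γ] [LinearOrder Γ] [IsOrderedAddMonoid Γ] [Field F] [Field k]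
    [MeasurableSpace k] (S : LiftSetup Γ F k) (μ : MeasureTheory.Measure k) (ψ : F → ℂ)
    (SchwartzBruhat : Set (k → ℂ)) : Submodule (CGamma Γ) (F → CGamma Γ) :=
  Submodule.span (CGamma Γ)
    {h | ∃ g ∈ SchwartzBruhat, ∃ (a b : F) (γ : Γ),
      h = fun x => embC Γ (ψ (b * x)) * S.lift (fun u => embC Γ (g u)) a γ x}


/-!
For a generator `ψ_b · g^{a,γ}` of `S(F,ψ)` the integrand of `f̂(x)` is `ψ_c · g^{a,γ}` with
`c = x + b`; translating by `a` reduces to `a = 0`. If `c t(γ) ∈ O_F`, then `ψ_c` factors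
through the residue field on `t(γ)O_F`, so `ψ_c · g^{0,γ}` is the lift of `g · ψ̄(· v)` with
`v = ρ(c t(γ))` and its integral is `ĝ(v) X^γ`. Otherwise some `τ ∈ t(γ)𝔪_F` has
`ψ(cτ) ≠ 1`; translation by `τ` fixes `g^{0,γ}` and scales the integrand by `ψ(cτ)`, so
translation invariance forces the integral to vanish. Altogether
`f̂ = ψ(ba) X^γ · ψ_a ĝ^{-b,-γ}`, again a generator; applying this twice and using
`ĝ̂(u) = λ g(-u)` on `k` gives the inversion formula, and both statements pass to the span
by linearity.
-/

namespace LiftSetup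

variable {Γ F k : Type*} [AddCommGroup Γ] [LinearOrder Γ] [IsOrderedAddMonoid Γ] [Field F] [Field k]
  (S : LiftSetup Γ F k)

theorem ν_one : S.ν 1 = 0 := by
  simpa using S.ν_mul 1 1 one_ne_zero one_ne_zero

theorem t_zero : S.t 0 = 1 := by
  simpa [S.t_ne 0] using S.t_add 0 0

theorem t_neg_mul_t (γ : Γ) : S.t (-γ) * S.t γ = 1 := by
  rw [← S.t_add, neg_add_cancel, S.t_zero]

theorem ν_neg_one : S.ν (-1 : F) = 0 := by
  have h : S.ν (-1 : F) + S.ν (-1) = 0 := by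
    rw [← S.ν_mul _ _ (by norm_num) (by norm_num), neg_mul_neg, one_mul, S.ν_one]
  rcases lt_trichotomy (S.ν (-1 : F)) 0 with hlt | heq | hgt
  · exact absurd h (add_neg hlt hlt).ne
  · exact heq
  · exact absurd h (add_pos hgt hgt).ne'

theorem ν_neg {x : F} (hx : x ≠ 0) : S.ν (-x) = S.ν x := by
  rw [← neg_one_mul, S.ν_mul _ _ (by norm_num) hx, S.ν_neg_one, zero_add]

theorem ν_inv {x : F} (hx : x ≠ 0) : S.ν x⁻¹ = -S.ν x := by
  have h := S.ν_mul x x⁻¹ hx (inv_ne_zero hx)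
  rw [mul_inv_cancel₀ hx, S.ν_one] at h
  exact eq_neg_of_add_eq_zero_right h.symm

theorem zero_mem_integers : (0 : F) ∈ S.integers := Or.inl rfl

theorem neg_mem_integers {x : F} (hx : x ∈ S.integers) : -x ∈ S.integers := by
  rcases eq_or_ne x 0 with rfl | h0
  · simpa using S.zero_mem_integers
  · exact Or.inr ((S.ν_neg h0).symm ▸ hx.resolve_left h0)

theorem mul_mem_integers {x y : F} (hx : x ∈ S.integers) (hy : y ∈ S.integers) :
    x * y ∈ S.integers := by
  rcases eq_or_ne x 0 with rfl | hx0
  · simpa using S.zero_mem_integers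
  rcases eq_or_ne y 0 with rfl | hy0
  · simpa using S.zero_mem_integers
  exact Or.inr (S.ν_mul x y hx0 hy0 ▸ add_nonneg (hx.resolve_left hx0) (hy.resolve_left hy0))

theorem add_mem_integers {x y : F} (hx : x ∈ S.integers) (hy : y ∈ S.integers) :
    x + y ∈ S.integers := by
  rcases eq_or_ne x 0 with rfl | hx0
  · simpa using hy
  rcases eq_or_ne y 0 with rfl | hy0
  · simpa using hx
  rcases eq_or_ne (x + y) 0 with hxy | hxy
  · exact Or.inl hxy
  exact Or.inr ((le_min (hx.resolve_left hx0) (hy.resolve_left hy0)).trans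
    (S.ν_add x y hx0 hy0 hxy))

theorem add_mem_integers_iff {x y : F} (hy : y ∈ S.integers) :
    x + y ∈ S.integers ↔ x ∈ S.integers :=
  ⟨fun h => by simpa using S.add_mem_integers h (S.neg_mem_integers hy),
    fun h => S.add_mem_integers h hy⟩

theorem ρ_zero : S.ρ (0 : F) = 0 :=
  (S.ρ_eq_zero 0 S.zero_mem_integers).mpr (Or.inl rfl)

theorem ρ_neg {x : F} (hx : x ∈ S.integers) : S.ρ (-x) = -S.ρ x := by
  have h := S.ρ_add x (-x) hx (S.neg_mem_integers hx)
  rw [add_neg_cancel, S.ρ_zero] at h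
  exact eq_neg_of_add_eq_zero_right h.symm

section Lift

variable {A : Type*} [Zero A] (f : k → A) {a : F} {γ : Γ} {x : F}

theorem lift_of_mem (h : (x - a) * S.t (-γ) ∈ S.integers) :
    S.lift f a γ x = f (S.ρ ((x - a) * S.t (-γ))) :=
  Set.indicator_of_mem (show x ∈ S.fracIdeal a γ from h) _

theorem lift_of_not_mem (h : (x - a) * S.t (-γ) ∉ S.integers) : S.lift f a γ x = 0 :=
  Set.indicator_of_notMem (show x ∉ S.fracIdeal a γ from h) _

theorem lift_eq_lift_zero_sub : S.lift f a γ x = S.lift f 0 γ (x - a) := by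
  by_cases h : (x - a) * S.t (-γ) ∈ S.integers
  · rw [S.lift_of_mem f h, S.lift_of_mem f (by rwa [sub_zero]), sub_zero]
  · rw [S.lift_of_not_mem f h, S.lift_of_not_mem f (by rwa [sub_zero])]

theorem lift_comp_neg : S.lift (fun u => f (-u)) (-a) γ x = S.lift f a γ (-x) := by
  have hneg : (x - -a) * S.t (-γ) = -((-x - a) * S.t (-γ)) := by ring
  by_cases h : (-x - a) * S.t (-γ) ∈ S.integers
  · rw [S.lift_of_mem _ h, S.lift_of_mem _ (hneg ▸ S.neg_mem_integers h), hneg, S.ρ_neg h, neg_neg]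
  · have h' : (x - -a) * S.t (-γ) ∉ S.integers := fun h' => by
      have := S.neg_mem_integers h'
      rw [hneg, neg_neg] at this
      exact h this
    rw [S.lift_of_not_mem _ h, S.lift_of_not_mem _ h']

/-- The hypotheses say `τ ∈ t(γ)𝔪_F`. -/
theorem lift_add_of_ρ_eq_zero {τ : F} (hτ : τ * S.t (-γ) ∈ S.integers)
    (hρ : S.ρ (τ * S.t (-γ)) = 0) : S.lift f a γ (x + τ) = S.lift f a γ x := by
  have hsplit : (x + τ - a) * S.t (-γ) = (x - a) * S.t (-γ) + τ * S.t (-γ) := by ring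
  by_cases h : (x - a) * S.t (-γ) ∈ S.integers
  · rw [S.lift_of_mem _ h, S.lift_of_mem _ (hsplit ▸ S.add_mem_integers h hτ), hsplit,
      S.ρ_add _ _ h hτ, hρ, add_zero]
  · rw [S.lift_of_not_mem _ h, S.lift_of_not_mem _ (by rwa [hsplit, S.add_mem_integers_iff hτ])]

theorem lift_const_mul {R : Type*} [MulZeroClass R] (c : R) (f : k → R) :
    S.lift (fun u => c * f u) a γ x = c * S.lift f a γ x :=
  Set.indicator_mul_right _ (fun _ => c) _

end Lift

namespace IsGoodCharacter

variable [TopologicalSpace k] {S} {ψ : F → ℂ} {𝔣 : Γ}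

theorem map_add (hψ : S.IsGoodCharacter ψ 𝔣) (x y : F) : ψ (x + y) = ψ x * ψ y := hψ.1 x y

theorem norm_eq_one (hψ : S.IsGoodCharacter ψ 𝔣) (x : F) : ‖ψ x‖ = 1 := hψ.2.1 x

theorem map_zero (hψ : S.IsGoodCharacter ψ 𝔣) : ψ 0 = 1 := by
  have hne : ψ 0 ≠ 0 := fun h => by simpa [h] using hψ.norm_eq_one 0
  have h := hψ.map_add 0 0
  rw [add_zero] at h
  exact (mul_eq_left₀ hne).mp h.symm

theorem map_mul_add (hψ : S.IsGoodCharacter ψ 𝔣) (c x y : F) :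
    ψ (c * (x + y)) = ψ (c * x) * ψ (c * y) := by
  rw [mul_add, hψ.map_add]

theorem exists_ne_one (hψ : S.IsGoodCharacter ψ S.one) : ∃ x ∈ S.integers, ψ x ≠ 1 := by
  obtain ⟨x, hx, hne⟩ := hψ.2.2.2.1
  exact ⟨x, hx, by rwa [sub_self, S.t_zero, one_mul] at hne⟩

theorem norm_residue_eq_one (hψ : S.IsGoodCharacter ψ 𝔣) {ψbar : k → ℂ}
    (hψbar : ∀ x ∈ S.integers, ψbar (S.ρ x) = ψ x) (u : k) : ‖ψbar u‖ = 1 := by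
  obtain ⟨x, hx, rfl⟩ := S.ρ_surj u
  rw [hψbar x hx, hψ.norm_eq_one]

end IsGoodCharacter

end LiftSetup

section CGamma

variable {Γ : Type*} [AddCommGroup Γ]

theorem Xp_add (γ δ : Γ) : Xp (γ + δ) = Xp γ * Xp δ := by
  rw [Xp, Xp, Xp, ← map_mul, AddMonoidAlgebra.single_mul_single, one_mul]

theorem Xp_zero : Xp (0 : Γ) = 1 := by
  rw [Xp, ← AddMonoidAlgebra.one_def, map_one]

theorem Xp_mul_Xp_neg (γ : Γ) : Xp γ * Xp (-γ) = 1 := by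
  rw [← Xp_add, add_neg_cancel, Xp_zero]

end CGamma

theorem MeasureTheory.Integrable.mul_comp_mul_right {k : Type*} [Mul k] [TopologicalSpace k]
    [ContinuousMul k] [MeasurableSpace k] [OpensMeasurableSpace k] {μ : Measure k}
    {g χ : k → ℂ} (hg : Integrable g μ) (hχ : Continuous χ) (hχ_le : ∀ u, ‖χ u‖ ≤ 1) (v : k) :
    Integrable (fun u => g u * χ (u * v)) μ :=
  hg.mul_bdd (hχ.comp (continuous_mul_const v)).aestronglyMeasurable
    (Filter.Eventually.of_forall fun u => hχ_le (u * v))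

def fourierK {k : Type*} [Mul k] [MeasurableSpace k] (μ : Measure k) (ψbar : k → ℂ)
    (g : k → ℂ) : k → ℂ :=
  fun v => ∫ u, g u * ψbar (u * v) ∂μ

section Twisted

variable {Γ F k : Type*} [AddCommGroup Γ] [LinearOrder Γ] [IsOrderedAddMonoid Γ] [Field F] [Field k]

/-- The generator `ψ_b · g^{a,γ}` of `S(F,ψ)`. -/
def twistedLift (S : LiftSetup Γ F k) (ψ : F → ℂ) (b : F) (g : k → ℂ) (a : F) (γ : Γ) :
    F → CGamma Γ :=
  fun x => embC Γ (ψ (b * x)) * S.lift (fun u => embC Γ (g u)) a γ x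

theorem twistedLift_mem_LFpsi [MeasurableSpace k] (μ : Measure k) (S : LiftSetup Γ F k)
    (ψ : F → ℂ) (b : F) {g : k → ℂ} (hg : Integrable g μ) (a : F) (γ : Γ) :
    twistedLift S ψ b g a γ ∈ LFpsi S μ ψ :=
  Submodule.subset_span ⟨_, liftC_mem_mu S μ hg a γ, b, rfl⟩

variable [TopologicalSpace k] {S : LiftSetup Γ F k} {ψ : F → ℂ} {𝔣 : Γ}

theorem twistedLift_mul_char (hψ : S.IsGoodCharacter ψ 𝔣) (b : F) (g : k → ℂ) (a : F)
    (γ : Γ) (x : F) :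
    (fun y => twistedLift S ψ b g a γ y * embC Γ (ψ (x * y))) = twistedLift S ψ (x + b) g a γ := by
  funext y
  simp only [twistedLift, add_mul, hψ.map_add, map_mul]
  ring

theorem twistedLift_add_of_lift_add (hψ : S.IsGoodCharacter ψ 𝔣) (c : F) {g : k → ℂ}
    {a a' : F} {γ : Γ} {τ : F}
    (hlift : ∀ y,
      S.lift (fun u => embC Γ (g u)) a γ (y + τ) = S.lift (fun u => embC Γ (g u)) a' γ y) :
    (fun y => twistedLift S ψ c g a γ (y + τ)) = embC Γ (ψ (c * τ)) • twistedLift S ψ c g a' γ := by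
  funext y
  simp only [twistedLift, Pi.smul_apply, smul_eq_mul, hlift, hψ.map_mul_add, map_mul]
  ring

end Twisted

section Extension

variable {Γ F k : Type*} [AddCommGroup Γ] [LinearOrder Γ] [IsOrderedAddMonoid Γ] [Field F] [Field k]
  [MeasurableSpace k] {S : LiftSetup Γ F k} {μ : Measure k} {ψ : F → ℂ}

def IntegratesLifts (Jext : LFpsi S μ ψ →ₗ[CGamma Γ] CGamma Γ) : Prop :=
  ∀ f : k → ℂ, Integrable f μ → ∀ (a : F) (γ : Γ)
    (hmem : S.lift (fun u => embC Γ (f u)) a γ ∈ LFpsi S μ ψ),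
    Jext ⟨S.lift (fun u => embC Γ (f u)) a γ, hmem⟩ = embC Γ (∫ u, f u ∂μ) * Xp γ

def IsTranslationInvariant (Jext : LFpsi S μ ψ →ₗ[CGamma Γ] CGamma Γ) : Prop :=
  ∀ (g : F → CGamma Γ) (hg : g ∈ LFpsi S μ ψ) (τ : F)
    (hg' : (fun x => g (x + τ)) ∈ LFpsi S μ ψ), Jext ⟨fun x => g (x + τ), hg'⟩ = Jext ⟨g, hg⟩

variable {Jext : LFpsi S μ ψ →ₗ[CGamma Γ] CGamma Γ}

theorem IsTranslationInvariant.apply_eq_mul_of_translate_eq_smul (hJ : IsTranslationInvariant Jext)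
    {L L' : F → CGamma Γ} (hL : L ∈ LFpsi S μ ψ) (hL' : L' ∈ LFpsi S μ ψ) {τ : F}
    {q : CGamma Γ} (hτ : (fun y => L (y + τ)) = q • L') :
    Jext ⟨L, hL⟩ = q * Jext ⟨L', hL'⟩ := by
  have hmem : (fun y => L (y + τ)) ∈ LFpsi S μ ψ := hτ ▸ Submodule.smul_mem _ q hL'
  calc Jext ⟨L, hL⟩ = Jext ⟨fun y => L (y + τ), hmem⟩ := (hJ L hL τ hmem).symm
    _ = Jext (q • ⟨L', hL'⟩) := congrArg Jext (Subtype.ext hτ)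
    _ = q * Jext ⟨L', hL'⟩ := by rw [map_smul, smul_eq_mul]

variable [TopologicalSpace k]

theorem IsTranslationInvariant.apply_twistedLift_zero_of_not_mem (hJ : IsTranslationInvariant Jext)
    (hψ : S.IsGoodCharacter ψ S.one) (g : k → ℂ) {c : F} {γ : Γ} (hc : c * S.t γ ∉ S.integers)
    (hmem : twistedLift S ψ c g 0 γ ∈ LFpsi S μ ψ) :
    Jext ⟨twistedLift S ψ c g 0 γ, hmem⟩ = 0 := by
  obtain ⟨x₀, hx₀, hψx₀⟩ := hψ.exists_ne_one
  have hc0 : c ≠ 0 := by rintro rfl; exact hc (by simpa using S.zero_mem_integers)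
  have hx₀0 : x₀ ≠ 0 := by rintro rfl; exact hψx₀ hψ.map_zero
  have hνc : S.ν c + γ < 0 :=
    not_le.mp fun h => hc (Or.inr (by rwa [S.ν_mul _ _ hc0 (S.t_ne γ), S.ν_t]))
  set τ := c⁻¹ * x₀
  have hντ : 0 < S.ν (τ * S.t (-γ)) := by
    rw [S.ν_mul _ _ (mul_ne_zero (inv_ne_zero hc0) hx₀0) (S.t_ne _),
      S.ν_mul _ _ (inv_ne_zero hc0) hx₀0, S.ν_inv hc0, S.ν_t,
      show -S.ν c + S.ν x₀ + -γ = S.ν x₀ + -(S.ν c + γ) by abel]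
    exact add_pos_of_nonneg_of_pos (hx₀.resolve_left hx₀0) (neg_pos.mpr hνc)
  have hτ : τ * S.t (-γ) ∈ S.integers := Or.inr hντ.le
  have hρτ : S.ρ (τ * S.t (-γ)) = 0 := (S.ρ_eq_zero _ hτ).mpr (Or.inr hντ)
  have key := hJ.apply_eq_mul_of_translate_eq_smul hmem hmem
    (twistedLift_add_of_lift_add hψ c fun y => S.lift_add_of_ρ_eq_zero _ hτ hρτ)
  rw [mul_inv_cancel_left₀ hc0] at key
  by_contra hJ0
  exact hψx₀ ((embC Γ).injective (by rw [(mul_eq_right₀ hJ0).mp key.symm, map_one]))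

variable [IsTopologicalRing k] [BorelSpace k] {ψbar : k → ℂ} {𝔣 : Γ}

theorem IntegratesLifts.apply_twistedLift_zero_of_mem (hJ : IntegratesLifts Jext)
    (hψ : S.IsGoodCharacter ψ 𝔣) (hψbar_cont : Continuous ψbar)
    (hψbar : ∀ x ∈ S.integers, ψbar (S.ρ x) = ψ x) {g : k → ℂ} (hg : Integrable g μ)
    {c : F} {γ : Γ} (hc : c * S.t γ ∈ S.integers) (hmem : twistedLift S ψ c g 0 γ ∈ LFpsi S μ ψ) :
    Jext ⟨twistedLift S ψ c g 0 γ, hmem⟩ = embC Γ (fourierK μ ψbar g (S.ρ (c * S.t γ))) * Xp γ := by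
  set v := S.ρ (c * S.t γ)
  have hfun : twistedLift S ψ c g 0 γ = S.lift (fun u => embC Γ (g u * ψbar (u * v))) 0 γ := by
    funext y
    by_cases hy : (y - 0) * S.t (-γ) ∈ S.integers
    · have hcy : (y - 0) * S.t (-γ) * (c * S.t γ) = c * y := by
        linear_combination (c * y) * S.t_neg_mul_t γ
      rw [twistedLift, S.lift_of_mem _ hy, S.lift_of_mem _ hy, ← S.ρ_mul _ _ hy hc,
        hψbar _ (S.mul_mem_integers hy hc), hcy, map_mul, mul_comm]
    · rw [twistedLift, S.lift_of_not_mem _ hy, S.lift_of_not_mem _ hy, mul_zero]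
  have hint := hg.mul_comp_mul_right hψbar_cont (fun u => (hψ.norm_residue_eq_one hψbar u).le) v
  have hmem' : S.lift (fun u => embC Γ (g u * ψbar (u * v))) 0 γ ∈ LFpsi S μ ψ := hfun ▸ hmem
  exact (congrArg Jext (Subtype.ext hfun : (⟨_, hmem⟩ : LFpsi S μ ψ) = ⟨_, hmem'⟩)).trans
    (hJ _ hint 0 γ hmem')

theorem apply_twistedLift (hJl : IntegratesLifts Jext) (hJt : IsTranslationInvariant Jext)
    (hψ : S.IsGoodCharacter ψ S.one) (hψbar_cont : Continuous ψbar)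
    (hψbar : ∀ x ∈ S.integers, ψbar (S.ρ x) = ψ x) {g : k → ℂ} (hg : Integrable g μ)
    (c a : F) (γ : Γ) (hmem : twistedLift S ψ c g a γ ∈ LFpsi S μ ψ) :
    Jext ⟨twistedLift S ψ c g a γ, hmem⟩ =
      embC Γ (ψ (c * a)) * (S.lift (fun u => embC Γ (fourierK μ ψbar g u)) 0 (-γ) c * Xp γ) := by
  have hmem₀ := twistedLift_mem_LFpsi μ S ψ c hg 0 γ
  rw [hJt.apply_eq_mul_of_translate_eq_smul hmem hmem₀ (twistedLift_add_of_lift_add hψ c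
    fun y => by rw [S.lift_eq_lift_zero_sub _ (a := a), add_sub_cancel_right])]
  congr 1
  by_cases hc : c * S.t γ ∈ S.integers
  · rw [hJl.apply_twistedLift_zero_of_mem hψ hψbar_cont hψbar hg hc,
      S.lift_of_mem _ (by simpa using hc)]
    simp
  · rw [hJt.apply_twistedLift_zero_of_not_mem hψ g hc, S.lift_of_not_mem _ (by simpa using hc),
      zero_mul]

end Extension

section Fourier

variable {Γ F k : Type*} [AddCommGroup Γ] [LinearOrder Γ] [IsOrderedAddMonoid Γ] [Field F] [Field k]
  [MeasurableSpace k] {S : LiftSetup Γ F k} {μ : Measure k} {ψ : F → ℂ}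

/-- Where `fourierF` is computed by `Jext` rather than given the junk value `0`; there it is
linear. -/
def fourierDomain (S : LiftSetup Γ F k) (μ : Measure k) (ψ : F → ℂ) :
    Submodule (CGamma Γ) (F → CGamma Γ) where
  carrier := {f | ∀ x, (fun y => f y * embC Γ (ψ (x * y))) ∈ LFpsi S μ ψ}
  add_mem' {f g} hf hg x := by
    convert add_mem (hf x) (hg x) using 1
    funext y
    exact add_mul _ _ _
  zero_mem' x := by
    convert (LFpsi S μ ψ).zero_mem using 1
    funext y
    exact zero_mul _
  smul_mem' c f hf x := by
    convert Submodule.smul_mem _ c (hf x) using 1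
    funext y
    exact smul_mul_assoc c (f y) _

variable (Jext : LFpsi S μ ψ →ₗ[CGamma Γ] CGamma Γ)

theorem fourierF_of_mem {f : F → CGamma Γ} (hf : f ∈ fourierDomain S μ ψ) (x : F) :
    fourierF S μ ψ Jext f x = Jext ⟨_, hf x⟩ :=
  dif_pos (hf x)

theorem fourierF_add {f g : F → CGamma Γ} (hf : f ∈ fourierDomain S μ ψ)
    (hg : g ∈ fourierDomain S μ ψ) :
    fourierF S μ ψ Jext (f + g) = fourierF S μ ψ Jext f + fourierF S μ ψ Jext g := by
  funext x
  rw [Pi.add_apply, fourierF_of_mem Jext (add_mem hf hg), fourierF_of_mem Jext hf,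
    fourierF_of_mem Jext hg, ← map_add]
  exact congrArg Jext (Subtype.ext (funext fun y => add_mul _ _ _))

theorem fourierF_smul (c : CGamma Γ) {f : F → CGamma Γ} (hf : f ∈ fourierDomain S μ ψ) :
    fourierF S μ ψ Jext (c • f) = c • fourierF S μ ψ Jext f := by
  funext x
  rw [Pi.smul_apply, fourierF_of_mem Jext (Submodule.smul_mem _ c hf), fourierF_of_mem Jext hf,
    ← map_smul]
  exact congrArg Jext (Subtype.ext (funext fun y => smul_mul_assoc c (f y) _))

theorem fourierF_zero : fourierF S μ ψ Jext 0 = 0 := by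
  simpa using fourierF_smul Jext 0 (fourierDomain S μ ψ).zero_mem

variable [TopologicalSpace k] {𝔣 : Γ}

theorem twistedLift_mem_fourierDomain (hψ : S.IsGoodCharacter ψ 𝔣) (b : F) {g : k → ℂ}
    (hg : Integrable g μ) (a : F) (γ : Γ) : twistedLift S ψ b g a γ ∈ fourierDomain S μ ψ := by
  intro x
  rw [twistedLift_mul_char hψ]
  exact twistedLift_mem_LFpsi μ S ψ _ hg a γ

theorem SFpsi_le_fourierDomain (hψ : S.IsGoodCharacter ψ 𝔣) {SB : Set (k → ℂ)}
    (hSB_int : ∀ g ∈ SB, Integrable g μ) : SFpsi S μ ψ SB ≤ fourierDomain S μ ψ :=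
  Submodule.span_le.mpr fun _ ⟨g, hg, a, b, γ, hh⟩ =>
    hh ▸ twistedLift_mem_fourierDomain hψ b (hSB_int g hg) a γ

variable [IsTopologicalRing k] [BorelSpace k] {Jext} {ψbar : k → ℂ}

theorem fourierF_twistedLift (hJl : IntegratesLifts Jext) (hJt : IsTranslationInvariant Jext)
    (hψ : S.IsGoodCharacter ψ S.one) (hψbar_cont : Continuous ψbar)
    (hψbar : ∀ x ∈ S.integers, ψbar (S.ρ x) = ψ x) {g : k → ℂ} (hg : Integrable g μ)
    (b a : F) (γ : Γ) :
    fourierF S μ ψ Jext (twistedLift S ψ b g a γ) =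
      (embC Γ (ψ (b * a)) * Xp γ) • twistedLift S ψ a (fourierK μ ψbar g) (-b) (-γ) := by
  funext x
  have hmem := twistedLift_mem_LFpsi μ S ψ (x + b) hg a γ
  rw [fourierF_of_mem Jext (twistedLift_mem_fourierDomain hψ b hg a γ),
    show (⟨_, _⟩ : LFpsi S μ ψ) = ⟨_, hmem⟩ from Subtype.ext (twistedLift_mul_char hψ b g a γ x),
    apply_twistedLift hJl hJt hψ hψbar_cont hψbar hg, Pi.smul_apply, smul_eq_mul, twistedLift,
    S.lift_eq_lift_zero_sub _ (a := -b), sub_neg_eq_add,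
    show (x + b) * a = b * a + a * x by ring, hψ.map_add, map_mul]
  ring

theorem fourierF_mem_SFpsi (hJl : IntegratesLifts Jext) (hJt : IsTranslationInvariant Jext)
    (hψ : S.IsGoodCharacter ψ S.one) (hψbar_cont : Continuous ψbar)
    (hψbar : ∀ x ∈ S.integers, ψbar (S.ρ x) = ψ x) {SB : Set (k → ℂ)}
    (hSB_int : ∀ g ∈ SB, Integrable g μ) (hSB_fourier : ∀ g ∈ SB, fourierK μ ψbar g ∈ SB)
    {f : F → CGamma Γ} (hf : f ∈ SFpsi S μ ψ SB) :
    fourierF S μ ψ Jext f ∈ SFpsi S μ ψ SB := by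
  have hdom := SFpsi_le_fourierDomain hψ hSB_int
  induction hf using Submodule.span_induction with
  | mem h hh =>
    obtain ⟨g, hg, a, b, γ, rfl⟩ := hh
    change fourierF S μ ψ Jext (twistedLift S ψ b g a γ) ∈ _
    rw [fourierF_twistedLift hJl hJt hψ hψbar_cont hψbar (hSB_int g hg)]
    exact Submodule.smul_mem _ _ (Submodule.subset_span ⟨_, hSB_fourier g hg, -b, a, -γ, rfl⟩)
  | zero => simpa only [fourierF_zero] using Submodule.zero_mem _
  | add u v hu hv ihu ihv =>
    rw [fourierF_add Jext (hdom hu) (hdom hv)]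
    exact add_mem ihu ihv
  | smul c u hu ih =>
    rw [fourierF_smul Jext c (hdom hu)]
    exact Submodule.smul_mem _ c ih

theorem fourierF_fourierF (hJl : IntegratesLifts Jext) (hJt : IsTranslationInvariant Jext)
    (hψ : S.IsGoodCharacter ψ S.one) (hψbar_cont : Continuous ψbar)
    (hψbar : ∀ x ∈ S.integers, ψbar (S.ρ x) = ψ x) {SB : Set (k → ℂ)}
    (hSB_int : ∀ g ∈ SB, Integrable g μ) (hSB_fourier : ∀ g ∈ SB, fourierK μ ψbar g ∈ SB)
    {lam : ℂ} (hSB_inv : ∀ g ∈ SB, ∀ u, fourierK μ ψbar (fourierK μ ψbar g) u = lam * g (-u))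
    {f : F → CGamma Γ} (hf : f ∈ SFpsi S μ ψ SB) (x : F) :
    fourierF S μ ψ Jext (fourierF S μ ψ Jext f) x = embC Γ lam * f (-x) := by
  have hdom := SFpsi_le_fourierDomain hψ hSB_int
  have hdom' : ∀ u ∈ SFpsi S μ ψ SB, fourierF S μ ψ Jext u ∈ fourierDomain S μ ψ := fun u hu =>
    hdom (fourierF_mem_SFpsi hJl hJt hψ hψbar_cont hψbar hSB_int hSB_fourier hu)
  induction hf using Submodule.span_induction with
  | mem h hh =>
    obtain ⟨g, hg, a, b, γ, rfl⟩ := hh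
    change fourierF S μ ψ Jext (fourierF S μ ψ Jext (twistedLift S ψ b g a γ)) x =
      embC Γ lam * twistedLift S ψ b g a γ (-x)
    have hĝ := hSB_int _ (hSB_fourier g hg)
    rw [fourierF_twistedLift hJl hJt hψ hψbar_cont hψbar (hSB_int g hg),
      fourierF_smul Jext _ (twistedLift_mem_fourierDomain hψ a hĝ _ _),
      fourierF_twistedLift hJl hJt hψ hψbar_cont hψbar hĝ, funext (hSB_inv g hg)]
    simp only [Pi.smul_apply, smul_eq_mul, twistedLift, map_mul, S.lift_const_mul,
      S.lift_comp_neg (fun u => embC Γ (g u)), neg_neg, show -b * x = b * -x by ring]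
    have hψba : embC Γ (ψ (b * a)) * embC Γ (ψ (a * -b)) = 1 := by
      rw [← map_mul, ← hψ.map_add, show b * a + a * -b = 0 by ring, hψ.map_zero, map_one]
    linear_combination
      (Xp γ * Xp (-γ) * (embC Γ lam * embC Γ (ψ (b * -x)) *
        S.lift (fun u => embC Γ (g u)) a γ (-x))) * hψba +
      (embC Γ lam * embC Γ (ψ (b * -x)) * S.lift (fun u => embC Γ (g u)) a γ (-x)) *
        Xp_mul_Xp_neg γ
  | zero => simp [fourierF_zero]
  | add u v hu hv ihu ihv =>
    rw [fourierF_add Jext (hdom hu) (hdom hv), fourierF_add Jext (hdom' u hu) (hdom' v hv),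
      Pi.add_apply, ihu, ihv, Pi.add_apply, mul_add]
  | smul c u hu ih =>
    rw [fourierF_smul Jext c (hdom hu), fourierF_smul Jext c (hdom' u hu), Pi.smul_apply, ih,
      Pi.smul_apply, smul_eq_mul, smul_eq_mul, mul_left_comm]

end Fourier

open MeasureTheory in
theorem statement7_general
    {Γ F k : Type*} [AddCommGroup Γ] [LinearOrder Γ] [IsOrderedAddMonoid Γ] [Field F] [Field k]
    [TopologicalSpace k] [IsTopologicalRing k]
    [MeasurableSpace k] [BorelSpace k]
    (μ : Measure k)
    (S : LiftSetup Γ F k)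
    (ψ : F → ℂ) (hψ : S.IsGoodCharacter ψ S.one)
    (ψbar : k → ℂ) (hψbar_cont : Continuous ψbar)
    (hψbar : ∀ x ∈ S.integers, ψbar (S.ρ x) = ψ x)
    -- the Schwartz–Bruhat space of `k` and its basic properties:
    (SchwartzBruhat : Set (k → ℂ))
    (hSB_int : ∀ g ∈ SchwartzBruhat, Integrable g μ)
    (hSB_fourier : ∀ g ∈ SchwartzBruhat,
      (fun v => ∫ u, g u * ψbar (u * v) ∂μ) ∈ SchwartzBruhat)
    (lam : ℝ)
    (hSB_inv : ∀ g ∈ SchwartzBruhat, ∀ u : k,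
      (∫ u', (∫ u'', g u'' * ψbar (u'' * u') ∂μ) * ψbar (u' * u) ∂μ) = lam * g (-u))
    -- the translation-invariant extension of `∫^F` to `𝓛(F,ψ)`:
    (Jext : LFpsi S μ ψ →ₗ[CGamma Γ] CGamma Γ)
    (hJext : ∀ (f : k → ℂ) (hf : Integrable f μ) (a : F) (γ : Γ)
      (hmem : S.lift (fun u => embC Γ (f u)) a γ ∈ LFpsi S μ ψ),
      Jext ⟨S.lift (fun u => embC Γ (f u)) a γ, hmem⟩ = embC Γ (∫ u, f u ∂μ) * Xp γ)
    (hJinv : ∀ (g : F → CGamma Γ) (hg : g ∈ LFpsi S μ ψ) (τ : F)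
      (hg' : (fun x => g (x + τ)) ∈ LFpsi S μ ψ),
      Jext ⟨fun x => g (x + τ), hg'⟩ = Jext ⟨g, hg⟩) :
    (∀ f ∈ SFpsi S μ ψ SchwartzBruhat,
      fourierF S μ ψ Jext f ∈ SFpsi S μ ψ SchwartzBruhat) ∧
    (∀ f ∈ SFpsi S μ ψ SchwartzBruhat, ∀ x : F,
      fourierF S μ ψ Jext (fourierF S μ ψ Jext f) x = embC Γ (lam : ℂ) * f (-x)) :=
  ⟨fun _ hf => fourierF_mem_SFpsi hJext hJinv hψ hψbar_cont hψbar hSB_int hSB_fourier hf,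
    fun _ hf => fourierF_fourierF hJext hJinv hψ hψbar_cont hψbar hSB_int hSB_fourier hSB_inv hf⟩

open MeasureTheory in
/-- The space `S(F,ψ)` is invariant under the Fourier transform, and for
`f ∈ S(F,ψ)` the double transform formula `f̂̂(x) = λ·f(-x)` holds, where `λ > 0` is the
double Fourier transform constant of the Schwartz–Bruhat space of `k` (with respect to the
induced character `ψ̄` and the chosen Haar measure). -/
theorem statement7
    {Γ F k : Type*} [AddCommGroup Γ] [LinearOrder Γ] [IsOrderedAddMonoid Γ] [Field F] [Field k]
    [TopologicalSpace k] [IsTopologicalRing k] [LocallyCompactSpace k]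
    [MeasurableSpace k] [BorelSpace k]
    (hk_nondiscrete : ¬ IsOpen ({0} : Set k))
    (μ : Measure k) [μ.IsAddHaarMeasure]
    (S : LiftSetup Γ F k)
    (ψ : F → ℂ) (hψ : S.IsGoodCharacter ψ S.one)
    (ψbar : k → ℂ) (hψbar_cont : Continuous ψbar)
    (hψbar : ∀ x ∈ S.integers, ψbar (S.ρ x) = ψ x)
    -- the Schwartz–Bruhat space of `k` and its basic properties:
    (SchwartzBruhat : Set (k → ℂ))
    (hSB_int : ∀ g ∈ SchwartzBruhat, Integrable g μ)
    (hSB_fourier : ∀ g ∈ SchwartzBruhat,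
      (fun v => ∫ u, g u * ψbar (u * v) ∂μ) ∈ SchwartzBruhat)
    (lam : ℝ) (hlam : 0 < lam)
    (hSB_inv : ∀ g ∈ SchwartzBruhat, ∀ u : k,
      (∫ u', (∫ u'', g u'' * ψbar (u'' * u') ∂μ) * ψbar (u' * u) ∂μ) = lam * g (-u))
    -- the translation-invariant extension of `∫^F` to `𝓛(F,ψ)`:
    (Jext : LFpsi S μ ψ →ₗ[CGamma Γ] CGamma Γ)
    (hJext : ∀ (f : k → ℂ) (hf : Integrable f μ) (a : F) (γ : Γ)
      (hmem : S.lift (fun u => embC Γ (f u)) a γ ∈ LFpsi S μ ψ),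
      Jext ⟨S.lift (fun u => embC Γ (f u)) a γ, hmem⟩ = embC Γ (∫ u, f u ∂μ) * Xp γ)
    (hJinv : ∀ (g : F → CGamma Γ) (hg : g ∈ LFpsi S μ ψ) (τ : F)
      (hg' : (fun x => g (x + τ)) ∈ LFpsi S μ ψ),
      Jext ⟨fun x => g (x + τ), hg'⟩ = Jext ⟨g, hg⟩) :
    (∀ f ∈ SFpsi S μ ψ SchwartzBruhat,
      fourierF S μ ψ Jext f ∈ SFpsi S μ ψ SchwartzBruhat) ∧
    (∀ f ∈ SFpsi S μ ψ SchwartzBruhat, ∀ x : F,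
      fourierF S μ ψ Jext (fourierF S μ ψ Jext f) x = embC Γ (lam : ℂ) * f (-x)) :=
  statement7_general μ S ψ hψ ψbar hψbar_cont hψbar SchwartzBruhat hSB_int hSB_fourier lam hSB_inv
    Jext hJext hJinv
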